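/- For all smooth vector fields u and ξ on ℝ^n the generalized deviation identity in its second form holds pointwise: u^j (u^i ξ^k_{|i})_{|j} = R^k_{ijl} u^i u^j ξ^l + ξ^k_{|j} F^j + u^i u^j (Tξ)^k_{i|j} + u^i [ (£_ξ (∇u))^k_i − ((£_ξ u)^k)_{|i} ], where F^k := u^i u^k_{|i}, (Tξ)^k_i := T^k_{il} ξ^l, and ∇u is the (1,1)-tensor field (∇u)^k_i := u^k_{|i}. -/

import Mathlib

open scoped BigOperators

noncomputable section

/-- Partial derivative `∂_j f` of a scalar function on `ℝ^n`. -/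
def pd {n : ℕ} (j : Fin n) (f : (Fin n → ℝ) → ℝ) (x : Fin n → ℝ) : ℝ :=
  fderiv ℝ f x (Pi.single j 1)

/-- Covariant derivative of a vector field: `ξ^k_{|j} = ∂_j ξ^k + Γ^k_{mj} ξ^m`. -/
def covV {n : ℕ} (Γ : Fin n → Fin n → Fin n → (Fin n → ℝ) → ℝ)
    (ξ : Fin n → (Fin n → ℝ) → ℝ) (k j : Fin n) (x : Fin n → ℝ) : ℝ :=
  pd j (ξ k) x + ∑ m, Γ k m j x * ξ m x

/-- Covariant derivative of a (1,1)-tensor field: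
`A^k_{i|j} = ∂_j A^k_i + Γ^k_{mj} A^m_i − Γ^m_{ij} A^k_m`. -/
def covT {n : ℕ} (Γ : Fin n → Fin n → Fin n → (Fin n → ℝ) → ℝ)
    (A : Fin n → Fin n → (Fin n → ℝ) → ℝ) (k i j : Fin n) (x : Fin n → ℝ) : ℝ :=
  pd j (A k i) x + ∑ m, Γ k m j x * A m i x - ∑ m, Γ m i j x * A k m x

/-- Curvature tensor
`R^k_{ijl} = ∂_j Γ^k_{il} − ∂_l Γ^k_{ij} + Γ^n_{il} Γ^k_{nj} − Γ^n_{ij} Γ^k_{nl}`. -/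
def curv {n : ℕ} (Γ : Fin n → Fin n → Fin n → (Fin n → ℝ) → ℝ)
    (k i j l : Fin n) (x : Fin n → ℝ) : ℝ :=
  pd j (Γ k i l) x - pd l (Γ k i j) x
    + ∑ m, Γ m i l x * Γ k m j x - ∑ m, Γ m i j x * Γ k m l x

/-- Torsion tensor `T^k_{ij} = Γ^k_{ji} − Γ^k_{ij}`. -/
def tor {n : ℕ} (Γ : Fin n → Fin n → Fin n → (Fin n → ℝ) → ℝ)
    (k i j : Fin n) (x : Fin n → ℝ) : ℝ :=
  Γ k j i x - Γ k i j x

/-- Lie derivative of a vector field: `(£_ξ u)^k = ξ^j ∂_j u^k − u^j ∂_j ξ^k`. -/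
def lieV {n : ℕ} (ξ u : Fin n → (Fin n → ℝ) → ℝ) (k : Fin n) (x : Fin n → ℝ) : ℝ :=
  ∑ j, ξ j x * pd j (u k) x - ∑ j, u j x * pd j (ξ k) x

/-- Lie derivative of a (1,1)-tensor field:
`(£_ξ A)^k_i = ξ^m ∂_m A^k_i − A^m_i ∂_m ξ^k + A^k_m ∂_i ξ^m`. -/
def lieT {n : ℕ} (ξ : Fin n → (Fin n → ℝ) → ℝ)
    (A : Fin n → Fin n → (Fin n → ℝ) → ℝ) (k i : Fin n) (x : Fin n → ℝ) : ℝ :=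
  ∑ m, ξ m x * pd m (A k i) x - ∑ m, A m i x * pd m (ξ k) x
    + ∑ m, A k m x * pd i (ξ m) x

/-- Lie derivative of the connection coefficients:
`£_ξ Γ^k_{ij} = ∂_j ∂_i ξ^k + ξ^m ∂_m Γ^k_{ij} − Γ^m_{ij} ∂_m ξ^k
  + Γ^k_{mj} ∂_i ξ^m + Γ^k_{im} ∂_j ξ^m`. -/
def lieC {n : ℕ} (ξ : Fin n → (Fin n → ℝ) → ℝ)
    (Γ : Fin n → Fin n → Fin n → (Fin n → ℝ) → ℝ)
    (k i j : Fin n) (x : Fin n → ℝ) : ℝ :=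
  pd j (fun y => pd i (ξ k) y) x + ∑ m, ξ m x * pd m (Γ k i j) x
    - ∑ m, Γ m i j x * pd m (ξ k) x + ∑ m, Γ k m j x * pd i (ξ m) x
    + ∑ m, Γ k i m x * pd j (ξ m) x


section Helpers
variable {n : ℕ}

@[fun_prop]
lemma contDiff_pd (j : Fin n) (f : (Fin n → ℝ) → ℝ) (hf : ContDiff ℝ (⊤ : ℕ∞) f) :
    ContDiff ℝ (⊤ : ℕ∞) (fun x => pd j f x) := by
  unfold pd
  exact (hf.fderiv_right (by simp)).clm_apply contDiff_const

@[fun_prop]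
lemma differentiable_pd (j : Fin n) (f : (Fin n → ℝ) → ℝ) (hf : ContDiff ℝ (⊤ : ℕ∞) f) :
    Differentiable ℝ (fun x => pd j f x) :=
  (contDiff_pd j f hf).differentiable (by simp)

@[fun_prop]
lemma differentiableAt_pd (j : Fin n) (f : (Fin n → ℝ) → ℝ) (hf : ContDiff ℝ (⊤ : ℕ∞) f)
    (x : Fin n → ℝ) : DifferentiableAt ℝ (fun x => pd j f x) x :=
  (differentiable_pd j f hf).differentiableAt

lemma pd_add (j : Fin n) {f g : (Fin n → ℝ) → ℝ} {x} (hf : DifferentiableAt ℝ f x)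
    (hg : DifferentiableAt ℝ g x) :
    pd j (fun y => f y + g y) x = pd j f x + pd j g x := by
  unfold pd; rw [fderiv_fun_add hf hg]; rfl

lemma pd_sub (j : Fin n) {f g : (Fin n → ℝ) → ℝ} {x} (hf : DifferentiableAt ℝ f x)
    (hg : DifferentiableAt ℝ g x) :
    pd j (fun y => f y - g y) x = pd j f x - pd j g x := by
  unfold pd; rw [fderiv_fun_sub hf hg]; rfl

lemma pd_mul (j : Fin n) {f g : (Fin n → ℝ) → ℝ} {x} (hf : DifferentiableAt ℝ f x)
    (hg : DifferentiableAt ℝ g x) :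
    pd j (fun y => f y * g y) x = pd j f x * g x + f x * pd j g x := by
  unfold pd; rw [fderiv_fun_mul hf hg]; simp; ring

lemma pd_sum (j : Fin n) {f : Fin n → (Fin n → ℝ) → ℝ} {x}
    (hf : ∀ i, DifferentiableAt ℝ (f i) x) :
    pd j (fun y => ∑ i, f i y) x = ∑ i, pd j (f i) x := by
  unfold pd
  rw [fderiv_fun_sum (fun i _ => hf i)]
  simp

lemma pd_comm {f : (Fin n → ℝ) → ℝ} (hf : ContDiff ℝ (⊤ : ℕ∞) f) (i j : Fin n) (x : Fin n → ℝ) :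
    pd j (fun y => pd i f y) x = pd i (fun y => pd j f y) x := by
  have hsymm : IsSymmSndFDerivAt ℝ f x := (hf.contDiffAt).isSymmSndFDerivAt (by
    rw [minSmoothness_of_isRCLikeNormedField]; exact WithTop.coe_le_coe.mpr le_top)
  have hdf : DifferentiableAt ℝ (fderiv ℝ f) x :=
    ((hf.fderiv_right (m := (⊤ : ℕ∞)) ((by simp))).differentiable (by simp)).differentiableAt
  have key : ∀ v w, fderiv ℝ (fun y => fderiv ℝ f y v) x w = fderiv ℝ (fderiv ℝ f) x w v := by
    intro v w
    rw [fderiv_clm_apply hdf (differentiableAt_const v)]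
    simp
  unfold pd
  rw [key, key]
  exact hsymm _ _

lemma covV_def {n : ℕ} (Γ : Fin n → Fin n → Fin n → (Fin n → ℝ) → ℝ)
    (ξ : Fin n → (Fin n → ℝ) → ℝ) (k j : Fin n) :
    covV Γ ξ k j = fun x => pd j (ξ k) x + ∑ m, Γ k m j x * ξ m x := rfl

lemma lieV_def {n : ℕ} (ξ u : Fin n → (Fin n → ℝ) → ℝ) (k : Fin n) :
    lieV ξ u k = fun x => ∑ j, ξ j x * pd j (u k) x - ∑ j, u j x * pd j (ξ k) x := rfl

end Helpers

section SumPerm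
variable {n : ℕ}

lemma sum2_swap (f : Fin n → Fin n → ℝ) :
    (∑ a, ∑ b, f a b) = ∑ a, ∑ b, f b a := Finset.sum_comm

lemma sum3_swap12 (f : Fin n → Fin n → Fin n → ℝ) :
    (∑ a, ∑ b, ∑ c, f a b c) = ∑ a, ∑ b, ∑ c, f b a c := Finset.sum_comm

lemma sum3_swap23 (f : Fin n → Fin n → Fin n → ℝ) :
    (∑ a, ∑ b, ∑ c, f a b c) = ∑ a, ∑ b, ∑ c, f a c b :=
  Finset.sum_congr rfl fun _ _ => Finset.sum_comm

lemma sum3_cycle (f : Fin n → Fin n → Fin n → ℝ) :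
    (∑ a, ∑ b, ∑ c, f a b c) = ∑ a, ∑ b, ∑ c, f b c a := by
  rw [sum3_swap23]; exact sum3_swap12 _

lemma sum3_swap13 (f : Fin n → Fin n → Fin n → ℝ) :
    (∑ a, ∑ b, ∑ c, f a b c) = ∑ a, ∑ b, ∑ c, f c b a := by
  rw [sum3_swap12, sum3_swap23]; exact sum3_swap12 _

lemma sum4_swap34 (f : Fin n → Fin n → Fin n → Fin n → ℝ) :
    (∑ a, ∑ b, ∑ c, ∑ d, f a b c d) = ∑ a, ∑ b, ∑ c, ∑ d, f a b d c :=
  Finset.sum_congr rfl fun _ _ => Finset.sum_congr rfl fun _ _ => Finset.sum_comm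

lemma sum4_swap13 (f : Fin n → Fin n → Fin n → Fin n → ℝ) :
    (∑ a, ∑ b, ∑ c, ∑ d, f a b c d) = ∑ a, ∑ b, ∑ c, ∑ d, f c b a d :=
  sum3_swap13 _

lemma sum4_cycle (f : Fin n → Fin n → Fin n → Fin n → ℝ) :
    (∑ a, ∑ b, ∑ c, ∑ d, f a b c d) = ∑ a, ∑ b, ∑ c, ∑ d, f b c a d :=
  sum3_cycle _

end SumPerm


/-- the generalized deviation identity, second form
`u^j (u^i ξ^k_{|i})_{|j} = R^k_{ijl} u^i u^j ξ^l + ξ^k_{|j} F^j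
  + u^i u^j (Tξ)^k_{i|j} + u^i [ (£_ξ (∇u))^k_i − ((£_ξ u)^k)_{|i} ]`,
where `F^k := u^i u^k_{|i}` and `(∇u)^k_i := u^k_{|i}`. -/
theorem generalized_deviation_second_form {n : ℕ} (hn : 0 < n)
    (Γ : Fin n → Fin n → Fin n → (Fin n → ℝ) → ℝ)
    (u ξ : Fin n → (Fin n → ℝ) → ℝ)
    (hΓ : ∀ k i j, ContDiff ℝ (⊤ : ℕ∞) (Γ k i j))
    (hu : ∀ k, ContDiff ℝ (⊤ : ℕ∞) (u k))
    (hξ : ∀ k, ContDiff ℝ (⊤ : ℕ∞) (ξ k)) :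
    ∀ (x : Fin n → ℝ) (k : Fin n),
      (∑ j, u j x * covV Γ (fun k y => ∑ i, u i y * covV Γ ξ k i y) k j x) =
        (∑ i, ∑ j, ∑ l, curv Γ k i j l x * u i x * u j x * ξ l x)
          + (∑ j, covV Γ ξ k j x * (∑ i, u i x * covV Γ u j i x))
          + (∑ i, ∑ j, u i x * u j x *
              covT Γ (fun k i y => ∑ l, tor Γ k i l y * ξ l y) k i j x)
          + (∑ i, u i x *
              (lieT ξ (fun k i => covV Γ u k i) k i x - covV Γ (lieV ξ u) k i x)) := by
  intro x k
  have h1 : ∀ k i j, Differentiable ℝ (Γ k i j) := fun k i j => (hΓ k i j).differentiable (by simp)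
  have h2 : ∀ k, Differentiable ℝ (u k) := fun k => (hu k).differentiable (by simp)
  have h3 : ∀ k, Differentiable ℝ (ξ k) := fun k => (hξ k).differentiable (by simp)
  simp only [covV_def, covV, covT, curv, tor, lieV_def, lieV, lieT]
  simp (disch := fun_prop) only [pd_add, pd_sub, pd_mul, pd_sum]
  simp only [mul_add, add_mul, mul_sub, sub_mul, Finset.sum_add_distrib, Finset.sum_sub_distrib,
    Finset.mul_sum, Finset.sum_mul]
  have e1 : (∑ a, ∑ b, u a x * (pd a (u b) x * pd b (ξ k) x))
      = ∑ a, ∑ b, pd a (ξ k) x * (u b x * pd b (u a) x) := by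
    rw [sum2_swap]
    exact Finset.sum_congr rfl fun a _ => Finset.sum_congr rfl fun b _ => by ring
  have e2 : (∑ a, ∑ b, ∑ c, u a x * (pd a (u b) x * (Γ k c b x * ξ c x)))
      = ∑ a, ∑ b, ∑ c, Γ k c a x * ξ c x * (u b x * pd b (u a) x) := by
    rw [sum3_swap12]
    exact Finset.sum_congr rfl fun a _ => Finset.sum_congr rfl fun b _ =>
      Finset.sum_congr rfl fun c _ => by ring
  have e3 : (∑ a, ∑ b, ∑ c, u a x * (u b x * (pd a (Γ k c b) x * ξ c x)))
      = ∑ a, ∑ b, ∑ c, u a x * u b x * (pd b (Γ k c a) x * ξ c x) := by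
    rw [sum3_swap12]
    exact Finset.sum_congr rfl fun a _ => Finset.sum_congr rfl fun b _ =>
      Finset.sum_congr rfl fun c _ => by ring
  have e4 : (∑ a, ∑ b, ∑ c, u a x * (u b x * (Γ k c b x * pd a (ξ c) x)))
      = ∑ a, ∑ b, ∑ c, u a x * u b x * (Γ k c a x * pd b (ξ c) x) := by
    rw [sum3_swap12]
    exact Finset.sum_congr rfl fun a _ => Finset.sum_congr rfl fun b _ =>
      Finset.sum_congr rfl fun c _ => by ring
  have e5 : (∑ a, ∑ b, ∑ c, ∑ d, u a x * (Γ k b a x * (u c x * (Γ b d c x * ξ d x))))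
      = ∑ a, ∑ b, ∑ c, ∑ d, u a x * u b x * (Γ k c b x * (Γ c d a x * ξ d x)) := by
    rw [sum4_cycle]
    exact Finset.sum_congr rfl fun a _ => Finset.sum_congr rfl fun b _ =>
      Finset.sum_congr rfl fun c _ => Finset.sum_congr rfl fun d _ => by ring
  have e6 : (∑ a, ∑ b, ∑ c, pd b (Γ k a c) x * u a x * u b x * ξ c x)
      = ∑ a, ∑ b, ∑ c, u a x * u b x * (pd b (Γ k a c) x * ξ c x) :=
    Finset.sum_congr rfl fun a _ => Finset.sum_congr rfl fun b _ =>
      Finset.sum_congr rfl fun c _ => by ring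
  have e7 : (∑ a, ∑ b, ∑ c, u a x * (ξ b x * (pd b (Γ k c a) x * u c x)))
      = ∑ a, ∑ b, ∑ c, pd c (Γ k a b) x * u a x * u b x * ξ c x := by
    rw [sum3_cycle]
    exact Finset.sum_congr rfl fun a _ => Finset.sum_congr rfl fun b _ =>
      Finset.sum_congr rfl fun c _ => by ring
  have e8 : (∑ a, ∑ b, ∑ c, ∑ d, u a x * u b x * (Γ k c b x * (Γ c a d x * ξ d x)))
      = ∑ a, ∑ b, ∑ c, ∑ d, Γ d a c x * Γ k d b x * u a x * u b x * ξ c x := by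
    rw [sum4_swap34]
    exact Finset.sum_congr rfl fun a _ => Finset.sum_congr rfl fun b _ =>
      Finset.sum_congr rfl fun c _ => Finset.sum_congr rfl fun d _ => by ring
  have e9 : (∑ a, ∑ b, ∑ c, ∑ d, u a x * u b x * (Γ c a b x * (Γ k c d x * ξ d x)))
      = ∑ a, ∑ b, ∑ c, ∑ d, Γ d a b x * Γ k d c x * u a x * u b x * ξ c x := by
    rw [sum4_swap34]
    exact Finset.sum_congr rfl fun a _ => Finset.sum_congr rfl fun b _ =>
      Finset.sum_congr rfl fun c _ => Finset.sum_congr rfl fun d _ => by ring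
  have e10 : (∑ a, ∑ b, ∑ c, pd a (ξ k) x * (u b x * (Γ a c b x * u c x)))
      = ∑ a, ∑ b, ∑ c, u a x * (Γ b c a x * u c x * pd b (ξ k) x) := by
    rw [sum3_swap12]
    exact Finset.sum_congr rfl fun a _ => Finset.sum_congr rfl fun b _ =>
      Finset.sum_congr rfl fun c _ => by ring
  have e11 : (∑ a, ∑ b, ∑ c, ∑ d, Γ k d a x * ξ d x * (u b x * (Γ a c b x * u c x)))
      = ∑ a, ∑ b, ∑ c, ∑ d, u a x * u b x * (Γ c a b x * (Γ k d c x * ξ d x)) := by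
    rw [sum4_swap13]
    exact Finset.sum_congr rfl fun a _ => Finset.sum_congr rfl fun b _ =>
      Finset.sum_congr rfl fun c _ => Finset.sum_congr rfl fun d _ => by ring
  have e12 : (∑ a, ∑ b, ∑ c, u a x * (Γ k c b x * u c x * pd a (ξ b) x))
      = ∑ a, ∑ b, ∑ c, u a x * u b x * (Γ k a c x * pd b (ξ c) x) := by
    rw [sum3_cycle]
    exact Finset.sum_congr rfl fun a _ => Finset.sum_congr rfl fun b _ =>
      Finset.sum_congr rfl fun c _ => by ring
  have e13 : (∑ a, ∑ b, u a x * (ξ b x * pd b (pd a (u k)) x))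
      = ∑ a, ∑ b, u a x * (ξ b x * pd a (pd b (u k)) x) :=
    Finset.sum_congr rfl fun a _ => Finset.sum_congr rfl fun b _ => by
      rw [pd_comm (hu k) a b x]
  have e14 : (∑ a, ∑ b, ∑ c, u a x * (ξ b x * (Γ k c a x * pd b (u c) x)))
      = ∑ a, ∑ b, ∑ c, u a x * (Γ k b a x * (ξ c x * pd c (u b) x)) := by
    rw [sum3_swap23]
    exact Finset.sum_congr rfl fun a _ => Finset.sum_congr rfl fun b _ =>
      Finset.sum_congr rfl fun c _ => by ring
  have e15 : (∑ a, ∑ b, u a x * (pd b (u k) x * pd a (ξ b) x))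
      = ∑ a, ∑ b, u a x * (pd a (ξ b) x * pd b (u k) x) :=
    Finset.sum_congr rfl fun a _ => Finset.sum_congr rfl fun b _ => by ring
  linarith [e1, e2, e3, e4, e5, e6, e7, e8, e9, e10, e11, e12, e13, e14, e15]
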